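/- Let d ≥ 2, let ν be a positive odd integer, and let x₁, …, xₙ ∈ ℝ^d be pairwise distinct points. Then the functions φ_j(x) = ‖x − x_j‖₂^ν, j = 1, …, n, are linearly independent as functions on any open connected set Ω ⊆ ℝ^d containing all the x_j. -/

import Mathlib

/-!
Fix `i` and restrict the vanishing combination to a line `t ↦ x i + t • v` through `x i`
with `‖v‖ = 1`. Near `t = 0` the terms with `j ≠ i` are real analytic in `t`, since the norm
is analytic away from the origin, so `c i * |t| ^ ν` agrees near `0` with an analytic function.
By the identity theorem that function is `c i * t ^ ν`, and for odd `ν` this is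
`-c i * |t| ^ ν` when `t < 0`; hence `c i = 0`.
-/

open Filter Topology

section

variable {E : Type*} [NormedAddCommGroup E] [InnerProductSpace ℝ E]

theorem analyticAt_inner_self (z : E) : AnalyticAt ℝ (fun y : E => inner ℝ y y) z :=
  ((innerSL ℝ).analyticAt_bilinear (z, z)).comp (f := fun y => (y, y))
    (analyticAt_id.prod analyticAt_id)

theorem analyticAt_norm_of_ne_zero {z : E} (hz : z ≠ 0) : AnalyticAt ℝ (‖·‖) z := by
  have hlog : AnalyticAt ℝ (fun y : E => Real.log (inner ℝ y y)) z :=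
    (analyticAt_log (real_inner_self_pos.mpr hz)).comp (f := fun y => inner ℝ y y)
      (analyticAt_inner_self z)
  have hexp : AnalyticAt ℝ (fun y : E => Real.exp (Real.log (inner ℝ y y) / 2)) z :=
    (hlog.div_const (c := 2)).rexp'
  refine hexp.congr ?_
  filter_upwards [eventually_ne_nhds hz] with y hy
  rw [real_inner_self_eq_norm_sq, Real.log_pow, Nat.cast_ofNat,
    mul_div_cancel_left₀ _ two_ne_zero, Real.exp_log (norm_pos_iff.mpr hy)]

end

theorem eq_zero_of_eventuallyEq_mul_abs_pow {f : ℝ → ℝ} {c : ℝ} {ν : ℕ} (hν : Odd ν)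
    (hf : AnalyticAt ℝ f 0) (h : f =ᶠ[𝓝 0] fun t => c * |t| ^ ν) : c = 0 := by
  have hpoly : AnalyticAt ℝ (fun t => f t - c * t ^ ν) 0 := by fun_prop
  have hright : ∀ᶠ t in 𝓝[>] 0, f t - c * t ^ ν = 0 := by
    filter_upwards [nhdsWithin_le_nhds h, self_mem_nhdsWithin] with t ht htpos
    rw [ht, abs_of_pos htpos, sub_self]
  have hzero : ∀ᶠ t in 𝓝 0, f t - c * t ^ ν = 0 :=
    hpoly.frequently_zero_iff_eventually_zero.mp
      (hright.frequently.filter_mono (nhdsGT_le_nhdsNE 0))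
  have hleft : ∀ᶠ t in 𝓝[<] 0, c * t ^ ν = 0 ∧ t < 0 := by
    filter_upwards [nhdsWithin_le_nhds h, nhdsWithin_le_nhds hzero, self_mem_nhdsWithin]
      with t ht hzt htneg
    rw [ht, abs_of_neg htneg, hν.neg_pow] at hzt
    exact ⟨by linarith, htneg⟩
  obtain ⟨t, hct, htneg⟩ := hleft.exists
  simpa [htneg.ne] using hct

theorem radial_powers_linearly_independent_general {d n : ℕ} (hd : 2 ≤ d)
    (ν : ℕ) (hν : Odd ν)
    (Ω : Set (EuclideanSpace ℝ (Fin d))) (hΩo : IsOpen Ω)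
    (x : Fin n → EuclideanSpace ℝ (Fin d)) (hxΩ : ∀ j, x j ∈ Ω)
    (hdist : Function.Injective x)
    (c : Fin n → ℝ)
    (hc : ∀ y ∈ Ω, ∑ j, c j * ‖y - x j‖ ^ ν = 0) :
    c = 0 := by
  funext i
  let v : EuclideanSpace ℝ (Fin d) := EuclideanSpace.single ⟨0, by omega⟩ 1
  have hv : ‖v‖ = 1 := by simp [v]
  let line : ℝ → EuclideanSpace ℝ (Fin d) := fun t => x i + t • v
  have hline : Continuous line := by fun_prop
  have hlineΩ : ∀ᶠ t in 𝓝 0, line t ∈ Ω :=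
    hline.continuousAt.preimage_mem_nhds (by simpa [line] using hΩo.mem_nhds (hxΩ i))
  have hrest : AnalyticAt ℝ
      (fun t => -∑ j ∈ Finset.univ.erase i, c j * ‖line t - x j‖ ^ ν) 0 := by
    refine (Finset.analyticAt_fun_sum _ fun j hj => ?_).neg
    have hne : line 0 - x j ≠ 0 := by
      simpa [line, sub_eq_zero] using hdist.ne (Finset.ne_of_mem_erase hj).symm
    have hnorm := (analyticAt_norm_of_ne_zero hne).comp (f := fun t => line t - x j)
      (by fun_prop)
    exact analyticAt_const.mul (hnorm.pow ν)
  refine eq_zero_of_eventuallyEq_mul_abs_pow hν hrest ?_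
  filter_upwards [hlineΩ] with t ht
  have hsum := hc _ ht
  rw [← Finset.add_sum_erase _ _ (Finset.mem_univ i)] at hsum
  have hi : ‖line t - x i‖ = |t| := by simp [line, norm_smul, hv]
  rw [hi] at hsum
  linarith

theorem radial_powers_linearly_independent {d n : ℕ} (hd : 2 ≤ d)
    (ν : ℕ) (hν : Odd ν) (hνpos : 0 < ν)
    (Ω : Set (EuclideanSpace ℝ (Fin d))) (hΩo : IsOpen Ω) (hΩc : IsConnected Ω)
    (x : Fin n → EuclideanSpace ℝ (Fin d)) (hxΩ : ∀ j, x j ∈ Ω)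
    (hdist : Function.Injective x)
    (c : Fin n → ℝ)
    (hc : ∀ y ∈ Ω, ∑ j, c j * ‖y - x j‖ ^ ν = 0) :
    c = 0 :=
  radial_powers_linearly_independent_general hd ν hν Ω hΩo x hxΩ hdist c hc
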